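/- Main theorem (decidable hierarchy of 2-process affine models): for any two 2-process affine tasks A on n = 3^ℓ and B on m = 3^{ℓ'} (ℓ, ℓ' ≥ 1), the affine model B* solves A (i.e., there exist k ≥ 1 and a chromatic carrier-preserving simplicial map δ from B^{⋆k} to the subdivided 1-simplex on {0,…,n} with δ(B^{⋆k}) ⊆ A) if and only if class(A) ⊑ class(B). -/

import Mathlib

/-!
2-process affine tasks, modeled combinatorially.
The ℓ-th iterated standard chromatic subdivision of the 1-simplex is the path
graph on vertices `{0, …, n}`, `n = 3^ℓ`, whose edges are the pairs `{i, i+1}`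
for `0 ≤ i < n`; vertex `i` has color `i % 2`, vertex `0` is the solo vertex of
process `p₀` and vertex `n` the solo vertex of `p₁`.  An edge `{i, i+1}` is
encoded by its left endpoint `i`, and a 2-process affine task on `n` is a
nonempty finite set `A : Finset ℕ` of such edges (left endpoints `< n`).
-/

/-- `StepRel A x y`: the vertices `x` and `y` are joined by an edge of `A`
(the edge `{i, i+1}` being encoded by its left endpoint `i`). -/
def StepRel (A : Finset ℕ) (x y : ℕ) : Prop :=
  (y = x + 1 ∧ x ∈ A) ∨ (x = y + 1 ∧ y ∈ A)

/-- `P₁(A)`: the vertices `0` and `n` are joined by a path all of whose edges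
lie in `A`. -/
def P1 (n : ℕ) (A : Finset ℕ) : Prop := Relation.ReflTransGen (StepRel A) 0 n

/-- `P₂(A)`: the edge `{0, 1}` belongs to `A`. -/
def P2 (A : Finset ℕ) : Prop := 0 ∈ A

/-- `P₃(A)`: the edge `{n-1, n}` belongs to `A`. -/
def P3 (n : ℕ) (A : Finset ℕ) : Prop := n - 1 ∈ A

open Classical in
/-- The class of a 2-process affine task `A` on `{0,…,n}`:
`1` if `P₁(A)`; `2` if `¬P₁ ∧ P₂ ∧ P₃`; `3` if `¬P₁ ∧ P₂ ∧ ¬P₃`;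
`4` if `¬P₁ ∧ ¬P₂ ∧ P₃`; `5` if `¬P₁ ∧ ¬P₂ ∧ ¬P₃`. -/
noncomputable def classOf (n : ℕ) (A : Finset ℕ) : ℕ :=
  if P1 n A then 1
  else if P2 A then (if P3 n A then 2 else 3)
  else (if P3 n A then 4 else 5)

/-- The class order `⊑` on `{1, …, 5}`: `c ⊑ c'` iff `c = c'`, or `c = 1`,
or `c' = 5`, or (`c = 2` and `c' ∈ {3, 4}`). -/
def ClassLE (c c' : ℕ) : Prop :=
  c = c' ∨ c = 1 ∨ c' = 5 ∨ (c = 2 ∧ (c' = 3 ∨ c' = 4))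

/-- The composition `A ⋆ B` of a task `A` on `{0,…,n}` with a task `B` on
`{0,…,m}`: each edge of `A` is replaced by an appropriately oriented copy of
`B`; its edges are `{i·m + r, i·m + r + 1}` for `{i, i+1} ∈ A` and
`{j, j+1} ∈ B`, where `r = j` if `i` is even and `r = m - 1 - j` if `i` is odd
(edges encoded by left endpoints). -/
def comp (m : ℕ) (A B : Finset ℕ) : Finset ℕ :=
  (A ×ˢ B).image fun p => p.1 * m + (if Even p.1 then p.2 else m - 1 - p.2)

/-- `iterTask n A k` is the iterate `A^{⋆k}` (for `k ≥ 1`) of a task `A` on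
`{0,…,n}`, a task on `{0,…,n^k}`: `A^{⋆1} = A`, `A^{⋆(k+1)} = A^{⋆k} ⋆ A`.
(The value at `k = 0` is irrelevant and set to `A`.) -/
def iterTask (n : ℕ) (A : Finset ℕ) : ℕ → Finset ℕ
  | 0 => A
  | 1 => A
  | k + 2 => comp n (iterTask n A (k + 1)) A

/-- A chromatic carrier-preserving simplicial map `δ` from a task `A` on
`{0,…,n}` to the subdivided 1-simplex on `{0,…,m}`: `δ` maps `{0,…,n}` to
`{0,…,m}`; `δ i ≡ i (mod 2)` for every vertex incident to an edge of `A`;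
`|δ (i+1) - δ i| = 1` for every edge `{i, i+1} ∈ A`; `δ 0 = 0` whenever
`{0,1} ∈ A`; and `δ n = m` whenever `{n-1, n} ∈ A`. -/
def IsCCMap (n m : ℕ) (A : Finset ℕ) (δ : ℕ → ℕ) : Prop :=
  (∀ i ≤ n, δ i ≤ m) ∧
  (∀ i ∈ A, δ i % 2 = i % 2 ∧ δ (i + 1) % 2 = (i + 1) % 2) ∧
  (∀ i ∈ A, δ (i + 1) = δ i + 1 ∨ δ i = δ (i + 1) + 1) ∧
  (0 ∈ A → δ 0 = 0) ∧
  (n - 1 ∈ A → δ n = m)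

/-- The image task `δ(A) = { {δ i, δ (i+1)} : {i, i+1} ∈ A }`
(edges encoded by left endpoints, i.e. by `min (δ i) (δ (i+1))`). -/
def imageTask (A : Finset ℕ) (δ : ℕ → ℕ) : Finset ℕ :=
  A.image fun i => min (δ i) (δ (i + 1))

/-- `Solves m n B A`: the affine model `B*` of a task `B` on `{0,…,m}` solves
the task `A` on `{0,…,n}`, i.e. there exist `k ≥ 1` and a chromatic
carrier-preserving simplicial map `δ` from `B^{⋆k}` (a task on `{0,…,m^k}`)
to the subdivided 1-simplex on `{0,…,n}` with `δ(B^{⋆k}) ⊆ A`. -/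
def Solves (m n : ℕ) (B A : Finset ℕ) : Prop :=
  ∃ k, 1 ≤ k ∧ ∃ δ : ℕ → ℕ,
    IsCCMap (m ^ k) n (iterTask m B k) δ ∧ imageTask (iterTask m B k) δ ⊆ A

/-! A solution is a simplicial map that sends paths to paths and fixes the solo vertices, and
`B^{⋆k}` inherits each of `P₁`, `P₂`, `P₃` from `B`; so a solution forces `Pᵢ(B) → Pᵢ(A)` for
`i = 1, 2, 3`, which is exactly `class(A) ⊑ class(B)`. Conversely, if `P₁(A)` holds, follow a path
of `A` from `0` to `n` and then oscillate on its last edge, for `k` so large that `m^k` exceeds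
the length of the path. Otherwise `P₁(B)` fails, so `B` misses an edge `g`, and already `k = 1`
suffices: fold the part of `B` below `g` onto `{0, 1}` and the part above onto `{n - 1, n}`, or
fold all of `B` onto a single edge of `A`. -/

section

variable {n m : ℕ} {A B : Finset ℕ}

instance : Std.Symm (StepRel A) := ⟨fun _ _ h => h.symm⟩

lemma stepRel_iff {x y : ℕ} :
    StepRel A x y ↔ (y = x + 1 ∨ x = y + 1) ∧ min x y ∈ A := by
  unfold StepRel
  constructor
  · rintro (⟨rfl, h⟩ | ⟨rfl, h⟩) <;> simp_all
  · rintro ⟨rfl | rfl, h⟩ <;> simp_all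

lemma StepRel.mod_two {x y : ℕ} (h : StepRel A x y) :
    y % 2 = (x + 1) % 2 := by
  rcases h with ⟨rfl, -⟩ | ⟨rfl, -⟩ <;> omega

lemma StepRel.right_le {x y : ℕ} (hA : ∀ i ∈ A, i < n) (h : StepRel A x y) :
    y ≤ n := by
  rcases h with ⟨rfl, h⟩ | ⟨rfl, h⟩ <;> have := hA _ h <;> omega

lemma zero_mem_of_stepRel {y : ℕ} (h : StepRel A 0 y) : 0 ∈ A := by
  rcases h with ⟨-, h⟩ | ⟨h, -⟩
  exacts [h, absurd h (by omega)]

lemma sub_one_mem_of_stepRel {x : ℕ} (h : StepRel A x n) (hn : n ∉ A) :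
    n - 1 ∈ A := by
  rcases h with ⟨rfl, h⟩ | ⟨-, h⟩
  exacts [h, absurd h hn]

lemma P2_of_P1 (hn : n ≠ 0) (h : P1 n A) : P2 A := by
  obtain h | ⟨_, h, -⟩ := h.cases_head
  exacts [absurd h.symm hn, zero_mem_of_stepRel h]

lemma P3_of_P1 (hA : ∀ i ∈ A, i < n) (hn : n ≠ 0) (h : P1 n A) :
    P3 n A := by
  obtain h | ⟨_, -, h⟩ := h.cases_tail
  exacts [absurd h hn, sub_one_mem_of_stepRel h fun hn => (hA n hn).false]

lemma exists_lt_notMem_of_not_P1 (h : ¬ P1 m B) : ∃ g < m, g ∉ B := by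
  by_contra! hB
  suffices ∀ t ≤ m, Relation.ReflTransGen (StepRel B) 0 t from h (this m le_rfl)
  intro t ht
  induction t with
  | zero => rfl
  | succ t ih => exact (ih (by omega)).tail (Or.inl ⟨rfl, hB t (by omega)⟩)

lemma mem_comp {e : ℕ} :
    e ∈ comp m A B ↔ ∃ i ∈ A, ∃ j ∈ B, e = i * m + (if Even i then j else m - 1 - j) := by
  simp only [comp, Finset.mem_image, Finset.mem_product, Prod.exists]
  constructor
  · rintro ⟨i, j, ⟨hi, hj⟩, rfl⟩
    exact ⟨i, hi, j, hj, rfl⟩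
  · rintro ⟨i, hi, j, hj, rfl⟩
    exact ⟨i, j, ⟨hi, hj⟩, rfl⟩

lemma zero_mem_comp (hA : 0 ∈ A) (hB : 0 ∈ B) : 0 ∈ comp m A B :=
  mem_comp.2 ⟨0, hA, 0, hB, by simp⟩

lemma sub_one_mem_comp (hn : Odd n) (hA : n - 1 ∈ A)
    (hB : m - 1 ∈ B) : n * m - 1 ∈ comp m A B := by
  refine mem_comp.2 ⟨n - 1, hA, m - 1, hB, ?_⟩
  obtain ⟨k, rfl⟩ := hn
  rw [if_pos (by simp), Nat.add_sub_cancel, add_mul, one_mul]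
  rcases m with _ | m
  · simp
  · omega

lemma reflTransGen_comp_of_mem (hBlt : ∀ j ∈ B, j < m) (hB : P1 m B) {x : ℕ} (hx : x ∈ A) :
    Relation.ReflTransGen (StepRel (comp m A B)) (x * m) ((x + 1) * m) := by
  rcases Nat.even_or_odd x with hev | hodd
  · have hstep : ∀ u v, StepRel B u v → StepRel (comp m A B) (x * m + u) (x * m + v) := by
      rintro u v (⟨rfl, hu⟩ | ⟨rfl, hv⟩)
      · exact Or.inl ⟨rfl, mem_comp.2 ⟨x, hx, u, hu, by rw [if_pos hev]⟩⟩
      · exact Or.inr ⟨rfl, mem_comp.2 ⟨x, hx, v, hv, by rw [if_pos hev]⟩⟩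
    simpa [Function.onFun, add_mul] using Relation.ReflTransGen.lift _ hstep _ _ hB
  · -- odd blocks are traversed backwards, from `(x + 1) * m` down to `x * m`
    have hne : ¬ Even x := Nat.not_even_iff_odd.2 hodd
    have hstep : ∀ u v, StepRel B u v →
        StepRel (comp m A B) (x * m + m - u) (x * m + m - v) := by
      rintro u v (⟨rfl, hu⟩ | ⟨rfl, hv⟩) <;> [have := hBlt u hu; have := hBlt v hv]
      · exact Or.inr ⟨by omega, mem_comp.2 ⟨x, hx, u, hu, by rw [if_neg hne]; omega⟩⟩
      · exact Or.inl ⟨by omega, mem_comp.2 ⟨x, hx, v, hv, by rw [if_neg hne]; omega⟩⟩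
    exact symm <| by
      simpa [Function.onFun, add_mul] using Relation.ReflTransGen.lift _ hstep _ _ hB

lemma P1_comp (hBlt : ∀ j ∈ B, j < m) (hA : P1 n A) (hB : P1 m B) :
    P1 (n * m) (comp m A B) := by
  have hw := Relation.ReflTransGen.lift' (p := StepRel (comp m A B)) (· * m) (fun a b h => by
    rcases h with ⟨rfl, ha⟩ | ⟨rfl, hb⟩
    · exact reflTransGen_comp_of_mem hBlt hB ha
    · exact symm (reflTransGen_comp_of_mem hBlt hB hb)) _ _ hA
  simpa [P1, Function.onFun] using hw

lemma zero_mem_iterTask (hB : 0 ∈ B) (k : ℕ) : 0 ∈ iterTask m B k := by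
  induction k with
  | zero => exact hB
  | succ k ih =>
    rcases k with _ | k
    exacts [hB, zero_mem_comp ih hB]

lemma iterTask_succ {k : ℕ} (hk : 1 ≤ k) :
    iterTask m B (k + 1) = comp m (iterTask m B k) B := by
  obtain ⟨j, rfl⟩ := Nat.exists_eq_add_of_le' hk
  rfl

lemma sub_one_mem_iterTask (hm : Odd m) (hB : m - 1 ∈ B) {k : ℕ} (hk : 1 ≤ k) :
    m ^ k - 1 ∈ iterTask m B k := by
  induction k, hk using Nat.le_induction with
  | base => rw [pow_one]; exact hB
  | succ k hk ih => rw [iterTask_succ hk, pow_succ]; exact sub_one_mem_comp hm.pow ih hB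

lemma P1_iterTask (hBlt : ∀ j ∈ B, j < m) (hB : P1 m B) {k : ℕ} (hk : 1 ≤ k) :
    P1 (m ^ k) (iterTask m B k) := by
  induction k, hk using Nat.le_induction with
  | base => rw [pow_one]; exact hB
  | succ k hk ih => rw [iterTask_succ hk, pow_succ]; exact P1_comp hBlt ih hB

lemma reflTransGen_map {T : Finset ℕ} {δ : ℕ → ℕ} (hT : ∀ i ∈ T, StepRel A (δ i) (δ (i + 1)))
    {x y : ℕ} (h : Relation.ReflTransGen (StepRel T) x y) :
    Relation.ReflTransGen (StepRel A) (δ x) (δ y) := by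
  refine Relation.ReflTransGen.lift δ (fun u v huv => ?_) _ _ h
  rcases huv with ⟨rfl, hu⟩ | ⟨rfl, hv⟩
  exacts [hT u hu, symm (hT v hv)]

lemma IsCCMap.stepRel {N : ℕ} {T : Finset ℕ} {δ : ℕ → ℕ} (hδ : IsCCMap N n T δ)
    (himg : imageTask T δ ⊆ A) (i : ℕ) (hi : i ∈ T) : StepRel A (δ i) (δ (i + 1)) :=
  stepRel_iff.2 ⟨hδ.2.2.1 i hi, himg (Finset.mem_image_of_mem _ hi)⟩

lemma Solves.P2_of_P2 (h : Solves m n B A) (hB : P2 B) : P2 A := by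
  obtain ⟨k, -, δ, hδ, himg⟩ := h
  have h0 := zero_mem_iterTask (m := m) hB k
  have hstep := hδ.stepRel himg 0 h0
  rw [hδ.2.2.2.1 h0] at hstep
  exact zero_mem_of_stepRel hstep

lemma Solves.P3_of_P3 (hm : Odd m) (hAlt : ∀ i ∈ A, i < n) (h : Solves m n B A)
    (hB : P3 m B) : P3 n A := by
  obtain ⟨k, hk, δ, hδ, himg⟩ := h
  have htop := sub_one_mem_iterTask hm hB hk
  have hstep := hδ.stepRel himg _ htop
  rw [Nat.sub_add_cancel (Nat.one_le_pow _ _ hm.pos), hδ.2.2.2.2 htop] at hstep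
  exact sub_one_mem_of_stepRel hstep fun hn => (hAlt n hn).false

lemma Solves.P1_of_P1 (hm : Odd m) (hBlt : ∀ j ∈ B, j < m) (h : Solves m n B A)
    (hB : P1 m B) : P1 n A := by
  obtain ⟨k, hk, δ, hδ, himg⟩ := h
  have hm0 : m ≠ 0 := hm.pos.ne'
  have hw := reflTransGen_map (hδ.stepRel himg) (P1_iterTask hBlt hB hk)
  rwa [hδ.2.2.2.1 (zero_mem_iterTask (P2_of_P1 hm0 hB) k),
    hδ.2.2.2.2 (sub_one_mem_iterTask hm (P3_of_P1 hBlt hm0 hB) hk)] at hw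

lemma solves_of_stepRel {k : ℕ} (hk : 1 ≤ k) (δ : ℕ → ℕ) (hbd : ∀ i ≤ m ^ k, δ i ≤ n)
    (hpar : ∀ i, δ i % 2 = i % 2) (hstep : ∀ i ∈ iterTask m B k, StepRel A (δ i) (δ (i + 1)))
    (h0 : 0 ∈ iterTask m B k → δ 0 = 0) (htop : m ^ k - 1 ∈ iterTask m B k → δ (m ^ k) = n) :
    Solves m n B A := by
  refine ⟨k, hk, δ, ⟨hbd, fun i _ => ⟨hpar i, hpar (i + 1)⟩,
    fun i hi => (stepRel_iff.1 (hstep i hi)).1, h0, htop⟩, fun e he => ?_⟩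
  obtain ⟨i, hi, rfl⟩ := Finset.mem_image.1 he
  exact (stepRel_iff.1 (hstep i hi)).2

def foldOnto (a i : ℕ) : ℕ := a + (i + a) % 2

lemma foldOnto_mod_two (a i : ℕ) : foldOnto a i % 2 = i % 2 := by
  unfold foldOnto; omega

lemma foldOnto_le (a i : ℕ) : foldOnto a i ≤ a + 1 := by
  unfold foldOnto; omega

lemma stepRel_foldOnto {a : ℕ} (ha : a ∈ A) (i : ℕ) :
    StepRel A (foldOnto a i) (foldOnto a (i + 1)) := by
  unfold foldOnto StepRel
  rcases Nat.mod_two_eq_zero_or_one (i + a) with h | h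
  · exact Or.inl ⟨by omega, by rwa [h, add_zero]⟩
  · exact Or.inr ⟨by omega, by rwa [show (i + 1 + a) % 2 = 0 by omega, add_zero]⟩

lemma foldOnto_sub_one (hmn : m % 2 = n % 2) : foldOnto (n - 1) m = n := by
  unfold foldOnto; omega

lemma solves_of_mem {a : ℕ} (ha : a ∈ A) (han : a < n) (h0 : 0 ∈ B → a = 0)
    (htop : m - 1 ∈ B → a = n - 1) (hmn : m % 2 = n % 2) : Solves m n B A := by
  refine solves_of_stepRel le_rfl (foldOnto a) (fun i _ => (foldOnto_le a i).trans han)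
    (foldOnto_mod_two a) (fun i _ => stepRel_foldOnto ha i) (fun h => ?_) (fun h => ?_)
  · rw [h0 h]; rfl
  · rw [pow_one] at h ⊢; rw [htop h]; exact foldOnto_sub_one hmn

lemma solves_of_notMem {g : ℕ} (hg : g < m) (hgB : g ∉ B) (h0 : 0 ∈ A) (htop : n - 1 ∈ A)
    (hn : n ≠ 0) (hmn : m % 2 = n % 2) : Solves m n B A := by
  set δ := fun i => if i ≤ g then foldOnto 0 i else foldOnto (n - 1) i
  have hstep : ∀ i ∈ iterTask m B 1, StepRel A (δ i) (δ (i + 1)) := by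
    intro i hi
    rcases lt_trichotomy i g with hlt | rfl | hgt
    · simpa [δ, hlt.le, Nat.succ_le_of_lt hlt] using stepRel_foldOnto h0 i
    · exact absurd hi hgB
    · simpa [δ, hgt.not_ge, (hgt.trans (Nat.lt_succ_self i)).not_ge] using
        stepRel_foldOnto htop i
  refine solves_of_stepRel le_rfl δ (fun i _ => ?_) (fun i => ?_) hstep (fun _ => ?_) (fun _ => ?_)
  · have := foldOnto_le 0 i; have := foldOnto_le (n - 1) i
    simp only [δ]; split_ifs <;> omega
  · simp only [δ]; split_ifs <;> exact foldOnto_mod_two _ i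
  · simp [δ, foldOnto]
  · simpa [δ, hg.not_ge] using foldOnto_sub_one hmn

lemma exists_stepRel_seq (htop : n - 1 ∈ A) {x : ℕ}
    (h : Relation.ReflTransGen (StepRel A) x n) :
    ∃ (f : ℕ → ℕ) (L : ℕ), f 0 = x ∧ (∀ i, StepRel A (f i) (f (i + 1))) ∧
      ∀ j, f (L + 2 * j) = n := by
  induction h using Relation.ReflTransGen.head_induction_on with
  | refl =>
    refine ⟨fun i => foldOnto (n - 1) (i + n), 0, ?_, fun i => ?_, fun j => ?_⟩
    · dsimp only [foldOnto]; omega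
    · simpa [add_right_comm i 1 n] using stepRel_foldOnto htop (i + n)
    · dsimp only [foldOnto]; omega
  | head hxc _ ih =>
    obtain ⟨f, L, hf0, hf, hL⟩ := ih
    refine ⟨fun | 0 => _ | i + 1 => f i, L + 1, rfl, fun i => ?_, fun j => ?_⟩
    · rcases i with _ | i
      · dsimp only; rwa [hf0]
      · exact hf i
    · rw [show L + 1 + 2 * j = L + 2 * j + 1 by ring]
      exact hL j

lemma solves_of_P1 (hAlt : ∀ i ∈ A, i < n) (hm : 2 ≤ m) (hmn : m % 2 = n % 2) (hn : n ≠ 0)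
    (h : P1 n A) : Solves m n B A := by
  obtain ⟨f, L, hf0, hf, hL⟩ := exists_stepRel_seq (P3_of_P1 hAlt hn h) h
  have hpar : ∀ i, f i % 2 = i % 2 := by
    intro i
    induction i with
    | zero => simp [hf0]
    | succ i ih => rw [(hf i).mod_two]; omega
  have hbd : ∀ i, f i ≤ n := by
    rintro (_ | i)
    · rw [hf0]; exact Nat.zero_le n
    · exact (hf i).right_le hAlt
  have hLn : L % 2 = n % 2 := by
    rw [← hpar L, ← hL 0, mul_zero, add_zero]
  have hpow : m ^ (L + 1) % 2 = m % 2 := by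
    rw [Nat.pow_mod]
    rcases Nat.mod_two_eq_zero_or_one m with h | h <;> simp [h]
  -- past `L` the walk oscillates on `{n - 1, n}`, so it is at `n` at every later time of the
  -- parity of `n`, in particular at `m ^ (L + 1)`
  obtain ⟨j, hj⟩ : ∃ j, m ^ (L + 1) = L + 2 * j :=
    ⟨(m ^ (L + 1) - L) / 2, by have := Nat.lt_pow_self (n := L + 1) hm; omega⟩
  exact solves_of_stepRel (Nat.le_add_left 1 L) f (fun i _ => hbd i) hpar (fun i _ => hf i)
    (fun _ => hf0) (fun _ => hj ▸ hL j)

lemma solves_of_P123_imp (hAne : A.Nonempty) (hAlt : ∀ i ∈ A, i < n) (hm : 2 ≤ m)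
    (hmn : m % 2 = n % 2) (hn : n ≠ 0) (h1 : P1 m B → P1 n A) (h2 : P2 B → P2 A)
    (h3 : P3 m B → P3 n A) : Solves m n B A := by
  by_cases hA : P1 n A
  · exact solves_of_P1 hAlt hm hmn hn hA
  by_cases hB2 : P2 B <;> by_cases hB3 : P3 m B
  · obtain ⟨g, hg, hgB⟩ := exists_lt_notMem_of_not_P1 (mt h1 hA)
    exact solves_of_notMem hg hgB (h2 hB2) (h3 hB3) hn hmn
  · exact solves_of_mem (h2 hB2) (Nat.pos_of_ne_zero hn) (fun _ => rfl) (absurd · hB3) hmn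
  · exact solves_of_mem (h3 hB3) (by omega) (absurd · hB2) (fun _ => rfl) hmn
  · obtain ⟨a, ha⟩ := hAne
    exact solves_of_mem ha (hAlt a ha) (absurd · hB2) (absurd · hB3) hmn

lemma classLE_classOf_iff (hA : P1 n A → P2 A ∧ P3 n A) :
    ClassLE (classOf n A) (classOf m B) ↔
      (P1 m B → P1 n A) ∧ (P2 B → P2 A) ∧ (P3 m B → P3 n A) := by
  unfold classOf ClassLE
  split_ifs <;> simp_all

end

theorem solves_iff_class_le_general
    (ℓ ℓ' n m : ℕ) (hℓ' : 1 ≤ ℓ') (hn : n = 3 ^ ℓ) (hm : m = 3 ^ ℓ')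
    (A B : Finset ℕ) (hAne : A.Nonempty) (hAlt : ∀ i ∈ A, i < n)
    (hBlt : ∀ i ∈ B, i < m) :
    Solves m n B A ↔ ClassLE (classOf n A) (classOf m B) := by
  have hn_odd : Odd n := hn ▸ Odd.pow (by decide)
  have hm_odd : Odd m := hm ▸ Odd.pow (by decide)
  have hm3 : 3 ≤ m := hm ▸ Nat.le_self_pow (by omega) 3
  have hn0 : n ≠ 0 := hn_odd.pos.ne'
  have hmn : m % 2 = n % 2 := by rw [Nat.odd_iff.1 hn_odd, Nat.odd_iff.1 hm_odd]
  rw [classLE_classOf_iff fun h => ⟨P2_of_P1 hn0 h, P3_of_P1 hAlt hn0 h⟩]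
  refine ⟨fun h => ⟨h.P1_of_P1 hm_odd hBlt, h.P2_of_P2, h.P3_of_P3 hm_odd hAlt⟩,
    fun ⟨h1, h2, h3⟩ => solves_of_P123_imp hAne hAlt (by omega) hmn hn0 h1 h2 h3⟩

/-- Main theorem (decidable hierarchy of 2-process affine models): for any two
2-process affine tasks `A` on `n = 3^ℓ` and `B` on `m = 3^ℓ'`, the affine
model `B*` solves `A` if and only if `class(A) ⊑ class(B)` in the class
order. -/
theorem solves_iff_class_le
    (ℓ ℓ' n m : ℕ) (hℓ : 1 ≤ ℓ) (hℓ' : 1 ≤ ℓ') (hn : n = 3 ^ ℓ) (hm : m = 3 ^ ℓ')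
    (A B : Finset ℕ) (hAne : A.Nonempty) (hAlt : ∀ i ∈ A, i < n)
    (hBne : B.Nonempty) (hBlt : ∀ i ∈ B, i < m) :
    Solves m n B A ↔ ClassLE (classOf n A) (classOf m B) :=
  solves_iff_class_le_general ℓ ℓ' n m hℓ' hn hm A B hAne hAlt hBlt
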